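/- arXiv:2002.03517 — 2 statements merged into one kernel-verified Lean document; each statement's English description precedes it below -/
import Mathlib

section
/- Fix p ≥ 2 and let D be a probability distribution on ℝᵈ such that for some ε > 0 and δ ∈ (0,1], every v ∈ ℝᵈ with ‖v‖_p ≤ ε satisfies tv(D, D+v) ≤ δ. Then E_{η~D}[‖η‖₂²] ≥ (ε² d^{2−2/p}/800)·(1−δ)/δ². -/
open MeasureTheory

/-- Total variation distance between two measures. -/
noncomputable def tv {α : Type*} [MeasurableSpace α] (P Q : Measure α) : ℝ :=
  ⨆ A : {s : Set α // MeasurableSet s}, |(P A.1).toReal - (Q A.1).toReal|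

/-- The ℓ_p norm of a vector in ℝᵈ, for `p : ℝ≥0∞` (with `p = ∞` giving the sup norm). -/
noncomputable def lpNorm {d : ℕ} (p : ENNReal) (v : EuclideanSpace ℝ (Fin d)) : ℝ :=
  if p = ⊤ then ⨆ i, |v i| else (∑ i, |v i| ^ p.toReal) ^ (1 / p.toReal)

/-!
Shifting `η` by `v` shifts `⟪v, η⟫` by `t = ‖v‖²`, so `tv(D, D + v) ≤ δ` forces every interval
`(s - t, s]` to carry at most `δ` of the law of `⟪v, η⟫`. Then `n` consecutive such intervals
centred at `0` carry at most `nδ`, so `⟪v, η⟫² ≥ (nt/2)²` with probability at least `1 - nδ`, and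
`n ≈ 1/(4δ)` gives `E⟪v, η⟫² ≥ ‖v‖⁴ (1 - δ) / (200 δ²)`.

Apply this to the `2^d` vectors `v = c σ` with `σ ∈ {±1}^d` and `c = ε d^{-1/p}`, all of `ℓ_p` norm
`ε` and squared Euclidean norm `c² d`. Since `∑_σ ⟪σ, η⟫² = 2^d ‖η‖²`, averaging over `σ` gives
`c² E‖η‖² ≥ (c² d)² (1 - δ) / (200 δ²)`, i.e. `E‖η‖² ≥ ε² d^{2-2/p} (1 - δ) / (200 δ²)`.
-/

open Set
open scoped ENNReal RealInnerProductSpace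

lemma Int.cast_units_mul_self {R : Type*} [Ring R] (u : ℤˣ) : ((u : ℤ) : R) * u = 1 := by
  rw [← Int.cast_mul, Int.units_coe_mul_self, Int.cast_one]

section TotalVariation

variable {α β : Type*} [MeasurableSpace α] [MeasurableSpace β]

lemma abs_measureReal_sub_le_tv (P Q : Measure α) [IsFiniteMeasure P] [IsFiniteMeasure Q]
    {A : Set α} (hA : MeasurableSet A) : |P.real A - Q.real A| ≤ tv P Q := by
  refine le_ciSup (f := fun A : {s : Set α // MeasurableSet s} => |P.real A.1 - Q.real A.1|)
    ⟨P.real univ + Q.real univ, ?_⟩ ⟨A, hA⟩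
  rintro _ ⟨B, rfl⟩
  have hP := measureReal_mono (μ := P) (subset_univ B.1)
  have hQ := measureReal_mono (μ := Q) (subset_univ B.1)
  have := measureReal_nonneg (μ := P) (s := B.1)
  have := measureReal_nonneg (μ := Q) (s := B.1)
  exact abs_sub_le_iff.2 ⟨by linarith, by linarith⟩

lemma tv_map_le (P Q : Measure α) [IsFiniteMeasure P] [IsFiniteMeasure Q] {f : α → β}
    (hf : Measurable f) : tv (P.map f) (Q.map f) ≤ tv P Q := by
  have : Nonempty {s : Set β // MeasurableSet s} := ⟨⟨∅, MeasurableSet.empty⟩⟩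
  refine ciSup_le fun A => ?_
  simp only [← measureReal_def, map_measureReal_apply hf A.2]
  exact abs_measureReal_sub_le_tv P Q (hf A.2)

end TotalVariation

section Real

variable {ν : Measure ℝ} {t δ : ℝ}

lemma measureReal_Ioc_le_of_tv_map_add_le [IsFiniteMeasure ν] (ht : 0 ≤ t)
    (h : tv ν (ν.map (· + t)) ≤ δ) (s : ℝ) : ν.real (Ioc (s - t) s) ≤ δ := by
  have hshift : (ν.map (· + t)).real (Ioi s) = ν.real (Ioi (s - t)) := by
    rw [map_measureReal_apply (measurable_add_const t) measurableSet_Ioi]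
    congr 1
    ext x
    simp [sub_lt_iff_lt_add]
  have hsplit : ν.real (Ioi (s - t)) = ν.real (Ioc (s - t) s) + ν.real (Ioi s) := by
    rw [← Set.Ioc_union_Ioi_eq_Ioi (by linarith : s - t ≤ s),
      measureReal_union (Set.Ioc_disjoint_Ioi le_rfl) measurableSet_Ioi]
  have := abs_measureReal_sub_le_tv ν (ν.map (· + t)) (measurableSet_Ioi (a := s))
  rw [hshift, abs_sub_comm, abs_le] at this
  linarith

lemma measureReal_Ioc_sub_nsmul_le [IsFiniteMeasure ν] (ht : 0 ≤ t)
    (h : tv ν (ν.map (· + t)) ≤ δ) (s : ℝ) (n : ℕ) : ν.real (Ioc (s - n * t) s) ≤ n * δ := by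
  induction n generalizing s with
  | zero => simp
  | succ n ih =>
    have hsplit : s - (n + 1 : ℕ) * t = s - t - n * t := by push_cast; ring
    calc ν.real (Ioc (s - (n + 1 : ℕ) * t) s)
        ≤ ν.real (Ioc (s - t - n * t) (s - t) ∪ Ioc (s - t) s) :=
          measureReal_mono (hsplit ▸ Set.Ioc_subset_Ioc_union_Ioc)
      _ ≤ ν.real (Ioc (s - t - n * t) (s - t)) + ν.real (Ioc (s - t) s) :=
          measureReal_union_le _ _
      _ ≤ n * δ + δ := add_le_add (ih (s - t)) (measureReal_Ioc_le_of_tv_map_add_le ht h s)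
      _ = (n + 1 : ℕ) * δ := by push_cast; ring

lemma ofReal_sq_mul_one_sub_le_lintegral_sq [IsProbabilityMeasure ν] (ht : 0 ≤ t)
    (h : tv ν (ν.map (· + t)) ≤ δ) (n : ℕ) :
    ENNReal.ofReal ((n * t / 2) ^ 2 * (1 - n * δ)) ≤ ∫⁻ x, ENNReal.ofReal (x ^ 2) ∂ν := by
  set r := n * t / 2
  have hr : 0 ≤ r := by positivity
  have hcompl : (Ioc (-r) r)ᶜ ⊆ {x | ENNReal.ofReal (r ^ 2) ≤ ENNReal.ofReal (x ^ 2)} := by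
    intro x hx
    simp only [mem_compl_iff, mem_Ioc, not_and_or, not_lt, not_le] at hx
    refine ENNReal.ofReal_le_ofReal ?_
    rcases hx with hx | hx <;> nlinarith
  have hmass : 1 - n * δ ≤ ν.real (Ioc (-r) r)ᶜ := by
    have := measureReal_Ioc_sub_nsmul_le ht h r n
    rw [show r - n * t = -r by ring] at this
    rw [probReal_compl_eq_one_sub measurableSet_Ioc]
    linarith
  calc ENNReal.ofReal (r ^ 2 * (1 - n * δ))
      = ENNReal.ofReal (r ^ 2) * ENNReal.ofReal (1 - n * δ) := ENNReal.ofReal_mul (sq_nonneg r)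
    _ ≤ ENNReal.ofReal (r ^ 2) * ν {x | ENNReal.ofReal (r ^ 2) ≤ ENNReal.ofReal (x ^ 2)} := by
        gcongr
        calc ENNReal.ofReal (1 - n * δ) ≤ ν (Ioc (-r) r)ᶜ :=
              (ENNReal.ofReal_le_ofReal hmass).trans_eq (ofReal_measureReal (measure_ne_top _ _))
          _ ≤ _ := measure_mono hcompl
    _ ≤ ∫⁻ x, ENNReal.ofReal (x ^ 2) ∂ν := mul_meas_ge_le_lintegral₀ (by fun_prop) _

lemma exists_nat_le_sq_mul_one_sub (hδ0 : 0 < δ) (hδ1 : δ ≤ 1) :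
    ∃ n : ℕ, (1 - δ) / δ ^ 2 / 200 ≤ ((n : ℝ) / 2) ^ 2 * (1 - n * δ) := by
  rcases le_or_gt (1 / 4) δ with hδ | hδ
  · refine ⟨1, ?_⟩
    rw [div_div, div_le_iff₀ (by positivity)]
    push_cast
    nlinarith [mul_nonneg (sub_nonneg.2 hδ1) (sub_nonneg.2 hδ)]
  · refine ⟨⌈1 / (4 * δ)⌉₊, ?_⟩
    have hN_ge := Nat.le_ceil (1 / (4 * δ))
    have hN_lt := Nat.ceil_lt_add_one (by positivity : 0 ≤ 1 / (4 * δ))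
    generalize (⌈1 / (4 * δ)⌉₊ : ℝ) = N at hN_ge hN_lt ⊢
    have hm_ge : 1 / 4 ≤ N * δ := by
      have := mul_le_mul_of_nonneg_right hN_ge hδ0.le
      rwa [div_mul_eq_mul_div, one_mul, div_mul_cancel_right₀ hδ0.ne', ← one_div] at this
    have hm_lt : N * δ < 1 / 2 := by
      have := mul_lt_mul_of_pos_right hN_lt hδ0
      rw [add_mul, div_mul_eq_mul_div, one_mul, div_mul_cancel_right₀ hδ0.ne'] at this
      linarith
    have hm : 1 / 32 ≤ (N * δ) ^ 2 * (1 - N * δ) := by nlinarith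
    rw [div_div, div_le_iff₀ (by positivity)]
    nlinarith [mul_le_mul_of_nonneg_left hm (sq_nonneg δ)]

theorem ofReal_sq_div_le_lintegral_sq_of_tv_map_add_le [IsProbabilityMeasure ν] (ht : 0 ≤ t)
    (hδ0 : 0 < δ) (hδ1 : δ ≤ 1) (h : tv ν (ν.map (· + t)) ≤ δ) :
    ENNReal.ofReal (t ^ 2 / 200 * ((1 - δ) / δ ^ 2)) ≤ ∫⁻ x, ENNReal.ofReal (x ^ 2) ∂ν := by
  obtain ⟨n, hn⟩ := exists_nat_le_sq_mul_one_sub hδ0 hδ1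
  refine le_trans (ENNReal.ofReal_le_ofReal ?_) (ofReal_sq_mul_one_sub_le_lintegral_sq ht h n)
  calc t ^ 2 / 200 * ((1 - δ) / δ ^ 2) = t ^ 2 * ((1 - δ) / δ ^ 2 / 200) := by ring
    _ ≤ t ^ 2 * ((n / 2) ^ 2 * (1 - n * δ)) := by gcongr
    _ = (n * t / 2) ^ 2 * (1 - n * δ) := by ring

end Real

section Euclidean

variable {ι : Type*} [Fintype ι] {D : Measure (EuclideanSpace ℝ ι)}

lemma map_inner_map_add (v : EuclideanSpace ℝ ι) :
    (D.map (· + v)).map (⟪v, ·⟫) = (D.map (⟪v, ·⟫)).map (· + ‖v‖ ^ 2) := by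
  rw [Measure.map_map (by fun_prop) (by fun_prop), Measure.map_map (by fun_prop) (by fun_prop)]
  congr 1
  ext η
  simp [inner_add_right]

theorem ofReal_norm_pow_four_div_le_lintegral_inner_sq [IsProbabilityMeasure D] {δ : ℝ}
    (hδ0 : 0 < δ) (hδ1 : δ ≤ 1) (v : EuclideanSpace ℝ ι) (h : tv D (D.map (· + v)) ≤ δ) :
    ENNReal.ofReal (‖v‖ ^ 4 / 200 * ((1 - δ) / δ ^ 2)) ≤ ∫⁻ η, ENNReal.ofReal (⟪v, η⟫ ^ 2) ∂D := by
  have hX : Measurable (⟪v, ·⟫) := by fun_prop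
  have : IsProbabilityMeasure (D.map (· + v)) := Measure.isProbabilityMeasure_map (by fun_prop)
  have : IsProbabilityMeasure (D.map (⟪v, ·⟫)) := Measure.isProbabilityMeasure_map hX.aemeasurable
  have hlaw := ofReal_sq_div_le_lintegral_sq_of_tv_map_add_le (ν := D.map (⟪v, ·⟫))
    (sq_nonneg ‖v‖) hδ0 hδ1 (by rw [← map_inner_map_add]; exact (tv_map_le _ _ hX).trans h)
  rw [lintegral_map (by fun_prop) hX] at hlaw
  convert hlaw using 4
  ring

def signVector (σ : ι → ℤˣ) : EuclideanSpace ℝ ι :=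
  WithLp.toLp 2 fun i => ((σ i : ℤ) : ℝ)

lemma norm_signVector_sq (σ : ι → ℤˣ) : ‖signVector σ‖ ^ 2 = Fintype.card ι := by
  rw [EuclideanSpace.norm_sq_eq]
  simp [signVector, sq, Int.cast_units_mul_self]

variable [DecidableEq ι]

lemma sum_units_mul_units (i j : ι) :
    ∑ σ : ι → ℤˣ, ((σ i : ℤ) : ℝ) * (σ j : ℤ) = if i = j then 2 ^ Fintype.card ι else 0 := by
  split_ifs with hij
  · subst hij
    simp [Int.cast_units_mul_self, Fintype.card_pi]
  · -- flipping the sign of `σ i` negates each summand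
    have hflip : ∑ σ : ι → ℤˣ, ((σ i : ℤ) : ℝ) * (σ j : ℤ)
        = -∑ σ : ι → ℤˣ, ((σ i : ℤ) : ℝ) * (σ j : ℤ) := by
      rw [← Finset.sum_neg_distrib]
      refine Fintype.sum_equiv (Equiv.mulLeft (Pi.mulSingle i (-1))) _ _ fun σ => ?_
      simp [Ne.symm hij]
    linarith

lemma sum_inner_signVector_sq (x : EuclideanSpace ℝ ι) :
    ∑ σ : ι → ℤˣ, ⟪signVector σ, x⟫ ^ 2 = 2 ^ Fintype.card ι * ‖x‖ ^ 2 := by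
  have hinner : ∀ σ : ι → ℤˣ, ⟪signVector σ, x⟫ = ∑ i, ((σ i : ℤ) : ℝ) * x i := fun σ => by
    simp [signVector, PiLp.inner_apply, mul_comm]
  calc ∑ σ : ι → ℤˣ, ⟪signVector σ, x⟫ ^ 2
      = ∑ σ : ι → ℤˣ, ∑ i, ∑ j, x i * x j * (((σ i : ℤ) : ℝ) * (σ j : ℤ)) := by
        simp only [hinner, sq, Finset.sum_mul_sum]
        exact Finset.sum_congr rfl fun σ _ => Finset.sum_congr rfl fun i _ =>
          Finset.sum_congr rfl fun j _ => by ring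
    _ = ∑ i, ∑ j, x i * x j * ∑ σ : ι → ℤˣ, ((σ i : ℤ) : ℝ) * (σ j : ℤ) := by
        simp only [Finset.mul_sum]
        rw [Finset.sum_comm]
        exact Finset.sum_congr rfl fun i _ => Finset.sum_comm
    _ = 2 ^ Fintype.card ι * ‖x‖ ^ 2 := by
        rw [EuclideanSpace.norm_sq_eq, Finset.mul_sum]
        simp [sum_units_mul_units, sq, mul_comm]

theorem ofReal_div_le_lintegral_norm_sq_of_tv_map_add_smul_signVector_le
    [IsProbabilityMeasure D] {c δ : ℝ} (hc : 0 < c) (hδ0 : 0 < δ) (hδ1 : δ ≤ 1)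
    (h : ∀ σ : ι → ℤˣ, tv D (D.map (· + c • signVector σ)) ≤ δ) :
    ENNReal.ofReal (c ^ 2 * Fintype.card ι ^ 2 / 200 * ((1 - δ) / δ ^ 2)) ≤
      ∫⁻ η, ENNReal.ofReal (‖η‖ ^ 2) ∂D := by
  set A := c ^ 2 * Fintype.card ι ^ 2 / 200 * ((1 - δ) / δ ^ 2)
  set K : ℝ := c ^ 2 * 2 ^ Fintype.card ι
  have hK : 0 < K := by positivity
  have hdir : ∀ σ, ENNReal.ofReal (c ^ 2 * A) ≤
      ∫⁻ η, ENNReal.ofReal (c ^ 2 * ⟪signVector σ, η⟫ ^ 2) ∂D := fun σ => by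
    have hnorm : ‖c • signVector σ‖ ^ 2 = c ^ 2 * Fintype.card ι := by
      rw [norm_smul, mul_pow, norm_signVector_sq, Real.norm_eq_abs, sq_abs]
    calc ENNReal.ofReal (c ^ 2 * A)
        = ENNReal.ofReal ((‖c • signVector σ‖ ^ 2) ^ 2 / 200 * ((1 - δ) / δ ^ 2)) := by
          rw [hnorm]
          congr 1
          simp only [A]
          ring
      _ ≤ ∫⁻ η, ENNReal.ofReal (⟪c • signVector σ, η⟫ ^ 2) ∂D := by
          rw [← pow_mul]
          exact ofReal_norm_pow_four_div_le_lintegral_inner_sq hδ0 hδ1 _ (h σ)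
      _ = ∫⁻ η, ENNReal.ofReal (c ^ 2 * ⟪signVector σ, η⟫ ^ 2) ∂D := by
          simp_rw [real_inner_smul_left, mul_pow]
  have hsum : ∀ η, ∑ σ : ι → ℤˣ, ENNReal.ofReal (c ^ 2 * ⟪signVector σ, η⟫ ^ 2) =
      ENNReal.ofReal K * ENNReal.ofReal (‖η‖ ^ 2) := fun η => by
    rw [← ENNReal.ofReal_sum_of_nonneg fun σ _ => by positivity, ← Finset.mul_sum,
      sum_inner_signVector_sq, ← ENNReal.ofReal_mul hK.le, mul_assoc]
  have hcard : ((Fintype.card (ι → ℤˣ) : ℕ) : ℝ≥0∞) = ENNReal.ofReal (2 ^ Fintype.card ι) := by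
    simp [Fintype.card_pi]
  refine (ENNReal.mul_le_mul_iff_right (ENNReal.ofReal_pos.2 hK).ne' ENNReal.ofReal_ne_top).1 ?_
  calc ENNReal.ofReal K * ENNReal.ofReal A
      = ∑ _σ : ι → ℤˣ, ENNReal.ofReal (c ^ 2 * A) := by
        rw [Finset.sum_const, nsmul_eq_mul, Finset.card_univ, hcard, ← ENNReal.ofReal_mul hK.le,
          ← ENNReal.ofReal_mul (by positivity)]
        congr 1
        simp only [K]
        ring
    _ ≤ ∑ σ : ι → ℤˣ, ∫⁻ η, ENNReal.ofReal (c ^ 2 * ⟪signVector σ, η⟫ ^ 2) ∂D :=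
        Finset.sum_le_sum fun σ _ => hdir σ
    _ = ∫⁻ η, ENNReal.ofReal K * ENNReal.ofReal (‖η‖ ^ 2) ∂D := by
        rw [← lintegral_finsetSum _ fun σ _ => by fun_prop]
        simp_rw [hsum]
    _ = ENNReal.ofReal K * ∫⁻ η, ENNReal.ofReal (‖η‖ ^ 2) ∂D :=
        lintegral_const_mul _ (by fun_prop)

end Euclidean

-- For `p = ∞` the right-hand side is `c * d ^ (1 / 0) = c`, as `1 / 0 = 0` in `ℝ`.
lemma lpNorm_smul_signVector {d : ℕ} {p : ℝ≥0∞} (hp : p ≠ 0) (hd : d ≠ 0) {c : ℝ} (hc : 0 ≤ c)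
    (σ : Fin d → ℤˣ) : lpNorm p (c • signVector σ) = c * d ^ (1 / p.toReal) := by
  have habs : ∀ i, |(c • signVector σ) i| = c := fun i => by
    rcases Int.units_eq_one_or (σ i) with hσ | hσ <;> simp [signVector, hσ, abs_of_nonneg hc]
  have : Nonempty (Fin d) := ⟨⟨0, Nat.pos_of_ne_zero hd⟩⟩
  unfold _root_.lpNorm
  split_ifs with htop
  · simp only [habs, ciSup_const, htop, ENNReal.toReal_top, div_zero, Real.rpow_zero, mul_one]
  · have hp' : p.toReal ≠ 0 := ENNReal.toReal_ne_zero.2 ⟨hp, htop⟩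
    simp only [habs, Finset.sum_const, Finset.card_univ, Fintype.card_fin, nsmul_eq_mul]
    rw [Real.mul_rpow (by positivity) (by positivity), ← Real.rpow_mul hc, mul_one_div_cancel hp',
      Real.rpow_one, mul_comm]

lemma two_sub_two_div_toReal_pos {p : ℝ≥0∞} (hp : 2 ≤ p) : 0 < 2 - 2 / p.toReal := by
  rcases eq_or_ne p ⊤ with rfl | htop
  · simp
  · have hp2 : 2 ≤ p.toReal := by simpa using ENNReal.toReal_mono htop hp
    have : 2 / p.toReal ≤ 1 := (div_le_one (by linarith)).2 hp2
    linarith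

lemma div_rpow_sq_mul_sq {x : ℝ} (hx : 0 < x) (ε q : ℝ) :
    (ε / x ^ (1 / q)) ^ 2 * x ^ 2 = ε ^ 2 * x ^ (2 - 2 / q) := by
  have hpow : (x ^ (1 / q)) ^ 2 = x ^ (2 / q) := by
    rw [← Real.rpow_natCast, ← Real.rpow_mul hx.le]
    ring_nf
  rw [Real.rpow_sub hx, Real.rpow_two, div_pow, hpow]
  ring

theorem stmt8 {d : ℕ} (p : ENNReal) (hp : 2 ≤ p)
    (D : Measure (EuclideanSpace ℝ (Fin d))) [IsProbabilityMeasure D]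
    (ε δ : ℝ) (hε : 0 < ε) (hδ0 : 0 < δ) (hδ1 : δ ≤ 1)
    (hTV : ∀ v : EuclideanSpace ℝ (Fin d), lpNorm p v ≤ ε → tv D (D.map (· + v)) ≤ δ) :
    ENNReal.ofReal (ε ^ 2 * (d : ℝ) ^ (2 - 2 / p.toReal) / 800 * ((1 - δ) / δ ^ 2)) ≤
      ∫⁻ η, ENNReal.ofReal (‖η‖ ^ 2) ∂D := by
  rcases Nat.eq_zero_or_pos d with rfl | hd
  · simp [Real.zero_rpow (two_sub_two_div_toReal_pos hp).ne']
  have hdR : (0 : ℝ) < d := Nat.cast_pos.2 hd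
  set c := ε / (d : ℝ) ^ (1 / p.toReal)
  have hc : 0 < c := by positivity
  have hlp : ∀ σ, lpNorm p (c • signVector σ) = ε := fun σ => by
    rw [lpNorm_smul_signVector (by positivity) hd.ne' hc.le, div_mul_cancel₀ _ (by positivity)]
  refine le_trans (ENNReal.ofReal_le_ofReal ?_)
    (ofReal_div_le_lintegral_norm_sq_of_tv_map_add_smul_signVector_le hc hδ0 hδ1
      fun σ => hTV _ (hlp σ).le)
  rw [Fintype.card_fin, div_rpow_sq_mul_sq hdR]
  have hQ : 0 ≤ (1 - δ) / δ ^ 2 := div_nonneg (by linarith) (sq_nonneg δ)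
  gcongr
  norm_num
end

section
/- Suppose tv(D, D+v) > δ for some distribution D on ℝᵈ and vector v. Then there exists a randomized binary classifier f : ℝᵈ → {0,1} such that the smoothed classifier g(·; D, f) satisfies Δ(0; D, f) > δ but g(v; D, f) ≠ g(0; D, f). -/
open MeasureTheory

attribute [local instance] Classical.propDecidable

/-- The score of class `y` at point `x` for the smoothing distribution `D` and
(randomized) base classifier `f`: the probability that `f(x + η) = y` for `η ~ D`. -/
noncomputable def score {d : ℕ} {Y : Type} (D : Measure (EuclideanSpace ℝ (Fin d)))
    (f : EuclideanSpace ℝ (Fin d) → PMF Y) (y : Y) (x : EuclideanSpace ℝ (Fin d)) : ENNReal :=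
  ∫⁻ η, f (x + η) y ∂D

/-- The smoothed classifier: outputs the class with the highest score, breaking
ties lexicographically (i.e. choosing the least maximizer). -/
noncomputable def gOut {d : ℕ} {Y : Type} [Fintype Y] [LinearOrder Y] [Nonempty Y]
    (D : Measure (EuclideanSpace ℝ (Fin d))) (f : EuclideanSpace ℝ (Fin d) → PMF Y)
    (x : EuclideanSpace ℝ (Fin d)) : Y :=
  (Finset.univ.filter fun a : Y => ∀ y : Y, score D f y x ≤ score D f a x).min' (by
    obtain ⟨a, -, ha⟩ := Finset.exists_max_image (Finset.univ : Finset Y)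
      (fun y => score D f y x) ⟨Classical.arbitrary Y, Finset.mem_univ _⟩
    exact ⟨a, Finset.mem_filter.mpr ⟨Finset.mem_univ _, fun y => ha y (Finset.mem_univ _)⟩⟩)

/-- The gap between the highest score and the runner-up score at `x`. -/
noncomputable def gap {d : ℕ} {Y : Type} [Fintype Y] [LinearOrder Y] [Nonempty Y]
    (D : Measure (EuclideanSpace ℝ (Fin d))) (f : EuclideanSpace ℝ (Fin d) → PMF Y)
    (x : EuclideanSpace ℝ (Fin d)) : ENNReal :=
  score D f (gOut D f x) x - ⨆ y : {y : Y // y ≠ gOut D f x}, score D f y.1 x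

/-!
Take a measurable set `T` on which `D` exceeds its translate `D.map (· + v)` by more than `δ`, and
let `f` answer `true` with probability `(1 - q) / 2 + 1_T / 2`, where `q` is the mass of the
translate on `T`. The score of `true` is `(1 - q) / 2 + D(T) / 2 > 1 / 2 + δ / 2` at `0` and
exactly `1 / 2` at `v`, where the tie is broken towards `false`; for a binary classifier the gap
is `2 · score - 1`.
-/

open Set

lemma exists_measurableSet_lt_sub_of_lt_tv {α : Type*} [MeasurableSpace α] {P Q : Measure α}
    [IsProbabilityMeasure P] [IsProbabilityMeasure Q] {δ : ℝ} (h : δ < tv P Q) :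
    ∃ T, MeasurableSet T ∧ δ < P.real T - Q.real T := by
  simp only [tv, ← measureReal_def] at h
  have hbdd :
      BddAbove (range fun A : {s : Set α // MeasurableSet s} => |P.real A - Q.real A|) := by
    refine ⟨1, forall_mem_range.2 fun A => abs_sub_le_iff.2 ⟨?_, ?_⟩⟩ <;>
      linarith [measureReal_nonneg (μ := P) (s := A.1), measureReal_nonneg (μ := Q) (s := A.1),
        measureReal_le_one (μ := P) (s := A.1), measureReal_le_one (μ := Q) (s := A.1)]
  obtain ⟨⟨A, hA⟩, hδA⟩ := (lt_ciSup_iff hbdd).1 h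
  rcases lt_abs.1 hδA with hδA | hδA
  · exact ⟨A, hA, hδA⟩
  · refine ⟨Aᶜ, hA.compl, ?_⟩
    rw [probReal_compl_eq_one_sub hA, probReal_compl_eq_one_sub hA]
    linarith

section SmoothedClassifier

variable {d : ℕ} (D : Measure (EuclideanSpace ℝ (Fin d))) {Y : Type}

lemma score_eq_lintegral_map (f : EuclideanSpace ℝ (Fin d) → PMF Y) (y : Y)
    (x : EuclideanSpace ℝ (Fin d)) : score D f y x = ∫⁻ z, f z y ∂(D.map (x + ·)) :=
  (lintegral_map_equiv (fun z => f z y) (MeasurableEquiv.addLeft x)).symm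

lemma score_le_score_gOut [Fintype Y] [LinearOrder Y] [Nonempty Y]
    (f : EuclideanSpace ℝ (Fin d) → PMF Y) (x : EuclideanSpace ℝ (Fin d)) (y : Y) :
    score D f y x ≤ score D f (gOut D f x) x := by
  unfold gOut
  exact (Finset.mem_filter.1 (Finset.min'_mem
    (Finset.univ.filter fun a : Y => ∀ y : Y, score D f y x ≤ score D f a x) _)).2 y

lemma gOut_le_of_forall_score_le [Fintype Y] [LinearOrder Y] [Nonempty Y]
    (f : EuclideanSpace ℝ (Fin d) → PMF Y) (x : EuclideanSpace ℝ (Fin d)) {a : Y}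
    (ha : ∀ y, score D f y x ≤ score D f a x) : gOut D f x ≤ a :=
  Finset.min'_le _ a (Finset.mem_filter.2 ⟨Finset.mem_univ _, ha⟩)

variable {f : EuclideanSpace ℝ (Fin d) → PMF Bool} {x : EuclideanSpace ℝ (Fin d)}

lemma gOut_eq_true_iff : gOut D f x = true ↔ score D f false x < score D f true x := by
  constructor
  · intro hg
    by_contra! hle
    have : gOut D f x ≤ false := gOut_le_of_forall_score_le D f x (by simpa using hle)
    rw [hg] at this
    exact absurd this (by decide)
  · intro hlt
    by_contra hg
    have := score_le_score_gOut D f x true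
    rw [Bool.eq_false_iff.2 hg] at this
    exact absurd hlt (not_lt.2 this)

lemma gap_eq_of_gOut_eq_true (hg : gOut D f x = true) :
    gap D f x = score D f true x - score D f false x := by
  rw [gap, hg]
  congr 1
  refine le_antisymm (iSup_le fun y => ?_) (le_iSup_of_le ⟨false, Bool.false_ne_true⟩ le_rfl)
  rw [Bool.eq_false_iff.2 y.2]

variable {s : ℝ}

lemma gOut_eq_true_iff_half_lt (htrue : score D f true x = ENNReal.ofReal s)
    (hfalse : score D f false x = ENNReal.ofReal (1 - s)) : gOut D f x = true ↔ 1 / 2 < s := by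
  rw [gOut_eq_true_iff, htrue, hfalse, ENNReal.ofReal_lt_ofReal_iff']
  exact ⟨fun h => by linarith [h.1], fun h => ⟨by linarith, by linarith⟩⟩

lemma gap_eq_of_half_lt (htrue : score D f true x = ENNReal.ofReal s)
    (hfalse : score D f false x = ENNReal.ofReal (1 - s)) (hs : 1 / 2 < s) (hs1 : s ≤ 1) :
    gap D f x = ENNReal.ofReal (2 * s - 1) := by
  rw [gap_eq_of_gOut_eq_true D ((gOut_eq_true_iff_half_lt D htrue hfalse).2 hs), htrue, hfalse,
    ← ENNReal.ofReal_sub _ (sub_nonneg.2 hs1)]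
  ring_nf

end SmoothedClassifier

def coinFlip (p : ℝ) (hp : p ∈ Icc (0 : ℝ) 1) : PMF Bool :=
  PMF.ofFintype (fun b => ENNReal.ofReal (bif b then p else 1 - p)) (by
    rw [Fintype.sum_bool, cond_true, cond_false, ← ENNReal.ofReal_add hp.1 (sub_nonneg.2 hp.2),
      add_sub_cancel, ENNReal.ofReal_one])

section CoinFlip

variable {α : Type*} [MeasurableSpace α] {μ : Measure α} {t : α → ℝ}

lemma integrable_of_forall_mem_Icc [IsFiniteMeasure μ] (htm : Measurable t)
    (ht : ∀ z, t z ∈ Icc (0 : ℝ) 1) : Integrable t μ :=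
  .of_bound htm.aestronglyMeasurable 1
    (ae_of_all _ fun z => abs_le.2 ⟨by linarith [(ht z).1], (ht z).2⟩)

lemma integral_const_add_indicator_const [IsProbabilityMeasure μ] {S : Set α}
    (hS : MeasurableSet S) (a b : ℝ) :
    ∫ z, (a + S.indicator (fun _ => b) z) ∂μ = a + μ.real S * b := by
  rw [integral_add (integrable_const a) ((integrable_const b).indicator hS), integral_const,
    integral_indicator_const b hS, probReal_univ, one_smul, smul_eq_mul]

variable (ht : ∀ z, t z ∈ Icc (0 : ℝ) 1)

lemma lintegral_coinFlip_true [IsFiniteMeasure μ] (htm : Measurable t) :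
    ∫⁻ z, coinFlip (t z) (ht z) true ∂μ = ENNReal.ofReal (∫ z, t z ∂μ) :=
  (ofReal_integral_eq_lintegral_ofReal (integrable_of_forall_mem_Icc htm ht)
    (ae_of_all _ fun z => (ht z).1)).symm

lemma lintegral_coinFlip_false [IsProbabilityMeasure μ] (htm : Measurable t) :
    ∫⁻ z, coinFlip (t z) (ht z) false ∂μ = ENNReal.ofReal (1 - ∫ z, t z ∂μ) := by
  have hint : Integrable t μ := integrable_of_forall_mem_Icc htm ht
  calc ∫⁻ z, coinFlip (t z) (ht z) false ∂μ = ENNReal.ofReal (∫ z, (1 - t z) ∂μ) :=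
        (ofReal_integral_eq_lintegral_ofReal ((integrable_const 1).sub hint)
          (ae_of_all _ fun z => sub_nonneg.2 (ht z).2)).symm
    _ = ENNReal.ofReal (1 - ∫ z, t z ∂μ) := by
        rw [integral_sub (integrable_const 1) hint, integral_const, probReal_univ, one_smul]

end CoinFlip

section CoinFlipClassifier

variable {d : ℕ} (D : Measure (EuclideanSpace ℝ (Fin d))) [IsProbabilityMeasure D]
  {t : EuclideanSpace ℝ (Fin d) → ℝ} (ht : ∀ z, t z ∈ Icc (0 : ℝ) 1)
  (x : EuclideanSpace ℝ (Fin d))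

lemma score_coinFlip_true (htm : Measurable t) :
    score D (fun z => coinFlip (t z) (ht z)) true x
      = ENNReal.ofReal (∫ z, t z ∂(D.map (x + ·))) := by
  rw [score_eq_lintegral_map, lintegral_coinFlip_true ht htm]

lemma score_coinFlip_false (htm : Measurable t) :
    score D (fun z => coinFlip (t z) (ht z)) false x
      = ENNReal.ofReal (1 - ∫ z, t z ∂(D.map (x + ·))) := by
  have := Measure.isProbabilityMeasure_map (μ := D) (measurable_const_add x).aemeasurable
  rw [score_eq_lintegral_map, lintegral_coinFlip_false ht htm]

lemma gOut_coinFlip_eq_true_iff (htm : Measurable t) :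
    gOut D (fun z => coinFlip (t z) (ht z)) x = true ↔ 1 / 2 < ∫ z, t z ∂(D.map (x + ·)) :=
  gOut_eq_true_iff_half_lt D (score_coinFlip_true D ht x htm) (score_coinFlip_false D ht x htm)

lemma gap_coinFlip_of_half_lt (htm : Measurable t) (hs : 1 / 2 < ∫ z, t z ∂(D.map (x + ·))) :
    gap D (fun z => coinFlip (t z) (ht z)) x
      = ENNReal.ofReal (2 * ∫ z, t z ∂(D.map (x + ·)) - 1) := by
  have := Measure.isProbabilityMeasure_map (μ := D) (measurable_const_add x).aemeasurable
  refine gap_eq_of_half_lt D (score_coinFlip_true D ht x htm)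
    (score_coinFlip_false D ht x htm) hs ?_
  calc ∫ z, t z ∂(D.map (x + ·)) ≤ ∫ _, 1 ∂(D.map (x + ·)) :=
        integral_mono (integrable_of_forall_mem_Icc htm ht) (integrable_const 1) fun z => (ht z).2
    _ = 1 := by simp

end CoinFlipClassifier

theorem stmt19 {d : ℕ} (D : Measure (EuclideanSpace ℝ (Fin d))) [IsProbabilityMeasure D]
    (v : EuclideanSpace ℝ (Fin d)) (δ : ℝ) (hδ0 : 0 ≤ δ)
    (h : δ < tv D (D.map (· + v))) :
    ∃ f : EuclideanSpace ℝ (Fin d) → PMF Bool,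
      ENNReal.ofReal δ < gap D f 0 ∧ gOut D f v ≠ gOut D f 0 := by
  have := Measure.isProbabilityMeasure_map (μ := D) (measurable_add_const v).aemeasurable
  obtain ⟨T, hT, hδT⟩ := exists_measurableSet_lt_sub_of_lt_tv h
  set q := (D.map (· + v)).real T
  have hq : q ∈ Icc (0 : ℝ) 1 := ⟨measureReal_nonneg, measureReal_le_one⟩
  set t : EuclideanSpace ℝ (Fin d) → ℝ := fun z =>
    (1 - q) / 2 + T.indicator (fun _ => 1 / 2) z
  have ht : ∀ z, t z ∈ Icc (0 : ℝ) 1 := fun z => by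
    by_cases hz : z ∈ T <;>
      simp only [t, hz, indicator_of_mem, indicator_of_notMem, not_false_eq_true, mem_Icc] <;>
      constructor <;> linarith [hq.1, hq.2]
  have htm : Measurable t := measurable_const.add (measurable_const.indicator hT)
  have hs0 : ∫ z, t z ∂(D.map (0 + ·)) = (1 - q) / 2 + D.real T * (1 / 2) := by
    simp only [zero_add, Measure.map_id']
    exact integral_const_add_indicator_const hT _ _
  have hsv : ∫ z, t z ∂(D.map (v + ·)) = 1 / 2 := by
    simp only [add_comm v, t]
    rw [integral_const_add_indicator_const hT]
    ring
  refine ⟨fun z => coinFlip (t z) (ht z), ?_, ?_⟩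
  · rw [gap_coinFlip_of_half_lt D ht 0 htm (by linarith), hs0,
      ENNReal.ofReal_lt_ofReal_iff (by linarith)]
    linarith
  · rw [Ne, (gOut_coinFlip_eq_true_iff D ht 0 htm).2 (by linarith),
      gOut_coinFlip_eq_true_iff D ht v htm, hsv]
    exact lt_irrefl _
end
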